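/- arXiv:1312.6337 — 2 statements merged into one kernel-verified Lean document; each statement's English description precedes it below -/
import Mathlib

section
/- For every even integer Δ ≥ 2 there exists a finite simple graph Γ which is arc-transitive, regular of degree Δ, has diameter at most 2, and has at least (Δ + 2)²/4 vertices. -/
/-!
The example is the rook's graph `K_n □ K_n` with `n = Δ / 2 + 1`: every vertex has `n - 1`
neighbours in its row and `n - 1` in its column, any two vertices are joined through a common
row or column, and there are `n ^ 2 = (Δ + 2) ^ 2 / 4` vertices. It is arc-transitive because
swapping the two factors moves every arc into a row, and the automorphisms of `K_n` (all
permutations) act transitively on ordered pairs of distinct vertices.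
-/

/-- A graph is arc-transitive if its automorphism group acts transitively on the set of
arcs (ordered pairs of adjacent vertices). -/
def SimpleGraph.IsArcTransitive {V : Type*} (G : SimpleGraph V) : Prop :=
  ∀ u v x y : V, G.Adj u v → G.Adj x y → ∃ φ : G ≃g G, φ u = x ∧ φ v = y

theorem Equiv.Perm.exists_apply_eq_and_apply_eq {α : Type*} [DecidableEq α] {a b c d : α}
    (hab : a ≠ b) (hcd : c ≠ d) : ∃ σ : Equiv.Perm α, σ a = c ∧ σ b = d := by
  have hb : Equiv.swap a c b ≠ c := by
    simpa only [Equiv.swap_apply_left] using (Equiv.swap a c).injective.ne hab.symm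
  exact ⟨(Equiv.swap a c).trans (Equiv.swap (Equiv.swap a c b) d),
    by simp [Equiv.swap_apply_of_ne_of_ne hb.symm hcd], by simp⟩

namespace SimpleGraph

variable {α β γ δ : Type*}

def IsVertexTransitive (G : SimpleGraph α) : Prop :=
  ∀ u v : α, ∃ φ : G ≃g G, φ u = v

-- `G.boxProd H` rather than `G □ H`: with all of Mathlib imported, `□` is the pushout product.
def Iso.boxProdCongr {G : SimpleGraph α} {G' : SimpleGraph β} {H : SimpleGraph γ}
    {H' : SimpleGraph δ} (φ : G ≃g G') (ψ : H ≃g H') : G.boxProd H ≃g G'.boxProd H' where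
  toEquiv := φ.toEquiv.prodCongr ψ.toEquiv
  map_rel_iff' := by simp [boxProd_adj, Iso.map_adj_iff]

@[simp]
lemma Iso.boxProdCongr_apply {G : SimpleGraph α} {G' : SimpleGraph β} {H : SimpleGraph γ}
    {H' : SimpleGraph δ} (φ : G ≃g G') (ψ : H ≃g H') (x : α × γ) :
    Iso.boxProdCongr φ ψ x = (φ x.1, ψ x.2) := rfl

lemma isVertexTransitive_top : (⊤ : SimpleGraph α).IsVertexTransitive := by
  classical
  exact fun u v => ⟨Iso.completeGraph (Equiv.swap u v), Equiv.swap_apply_left u v⟩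

lemma isArcTransitive_top : (⊤ : SimpleGraph α).IsArcTransitive := by
  classical
  intro u v x y huv hxy
  obtain ⟨σ, hσu, hσv⟩ := Equiv.Perm.exists_apply_eq_and_apply_eq huv hxy
  exact ⟨Iso.completeGraph σ, hσu, hσv⟩

lemma ncard_neighborSet_eq_degree (G : SimpleGraph α) (v : α) [Fintype (G.neighborSet v)] :
    (G.neighborSet v).ncard = G.degree v := by
  rw [Set.ncard_eq_toFinset_card', Set.toFinset_card, card_neighborSet_eq_degree]

lemma IsRegularOfDegree.boxProd {G : SimpleGraph α} {H : SimpleGraph β} [G.LocallyFinite]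
    [H.LocallyFinite] {d e : ℕ} (hG : G.IsRegularOfDegree d) (hH : H.IsRegularOfDegree e) :
    (G.boxProd H).IsRegularOfDegree (d + e) := fun x => by
  rw [degree_boxProd, hG x.1, hH x.2]

lemma dist_boxProd {G : SimpleGraph α} {H : SimpleGraph β} {x y : α × β}
    (hG : G.Reachable x.1 y.1) (hH : H.Reachable x.2 y.2) :
    (G.boxProd H).dist x y = G.dist x.1 y.1 + H.dist x.2 y.2 := by
  rw [dist, edist_boxProd, ENat.toNat_add (edist_ne_top_iff_reachable.mpr hG)
    (edist_ne_top_iff_reachable.mpr hH)]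
  rfl

lemma dist_top_le_one (u v : α) : (⊤ : SimpleGraph α).dist u v ≤ 1 := by
  classical
  rw [dist_top]
  split_ifs <;> simp

section boxProd

variable {G : SimpleGraph α} {H : SimpleGraph β}

lemma IsArcTransitive.exists_iso_boxProd_of_adj_left (hG : G.IsArcTransitive)
    (hH : H.IsVertexTransitive) {a a' c c' : α} (b d : β) (ha : G.Adj a a') (hc : G.Adj c c') :
    ∃ φ : G.boxProd H ≃g G.boxProd H, φ (a, b) = (c, d) ∧ φ (a', b) = (c', d) := by
  obtain ⟨φ, hφa, hφa'⟩ := hG a a' c c' ha hc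
  obtain ⟨ψ, hψ⟩ := hH b d
  exact ⟨Iso.boxProdCongr φ ψ, by simp [hφa, hψ], by simp [hφa', hψ]⟩

lemma exists_iso_boxProd_self_of_adj {x y : α × α} (h : (G.boxProd G).Adj x y) :
    ∃ (θ : G.boxProd G ≃g G.boxProd G) (a a' b : α),
      G.Adj a a' ∧ θ x = (a, b) ∧ θ y = (a', b) := by
  rcases boxProd_adj.mp h with ⟨hadj, heq⟩ | ⟨hadj, heq⟩
  · exact ⟨Iso.refl, x.1, y.1, x.2, hadj, rfl, Prod.ext rfl heq.symm⟩
  · exact ⟨boxProdComm (G := G) (H := G), x.2, y.2, x.1, hadj, rfl, Prod.ext rfl heq.symm⟩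

lemma IsArcTransitive.boxProd_self (hA : G.IsArcTransitive) (hV : G.IsVertexTransitive) :
    (G.boxProd G).IsArcTransitive := by
  intro x y x' y' hxy hx'y'
  obtain ⟨θ, a, a', b, ha, hθx, hθy⟩ := exists_iso_boxProd_self_of_adj hxy
  obtain ⟨θ', c, c', d, hc, hθ'x', hθ'y'⟩ := exists_iso_boxProd_self_of_adj hx'y'
  obtain ⟨φ, hφa, hφa'⟩ := hA.exists_iso_boxProd_of_adj_left hV b d ha hc
  refine ⟨θ.trans (φ.trans θ'.symm), ?_, ?_⟩
  · simp [hθx, hφa, ← hθ'x']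
  · simp [hθy, hφa', ← hθ'y']

end boxProd

end SimpleGraph

open SimpleGraph in
theorem arcTransitive_diameter_two_lower_bound_even_degree_general
    (Δ : ℕ) (hEven : Even Δ) :
    ∃ (V : Type) (_ : Fintype V) (G : SimpleGraph V),
      G.IsArcTransitive ∧
      (∀ v : V, (G.neighborSet v).ncard = Δ) ∧
      G.Connected ∧ (∀ u v : V, G.dist u v ≤ 2) ∧
      (Δ + 2) ^ 2 ≤ 4 * Fintype.card V := by
  obtain ⟨k, rfl⟩ := hEven
  let K : SimpleGraph (Fin (k + 1)) := ⊤
  refine ⟨Fin (k + 1) × Fin (k + 1), inferInstance, K.boxProd K,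
    isArcTransitive_top.boxProd_self isVertexTransitive_top, fun v => ?_,
    connected_top.boxProd connected_top, fun u v => ?_, ?_⟩
  · rw [ncard_neighborSet_eq_degree, (IsRegularOfDegree.top.boxProd IsRegularOfDegree.top) v]
    simp
  · rw [dist_boxProd (connected_top.preconnected _ _) (connected_top.preconnected _ _)]
    exact add_le_add (dist_top_le_one _ _) (dist_top_le_one _ _)
  · simp only [Fintype.card_prod, Fintype.card_fin]
    exact le_of_eq (by ring)

theorem arcTransitive_diameter_two_lower_bound_even_degree
    (Δ : ℕ) (hΔ : 2 ≤ Δ) (hEven : Even Δ) :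
    ∃ (V : Type) (_ : Fintype V) (G : SimpleGraph V),
      G.IsArcTransitive ∧
      (∀ v : V, (G.neighborSet v).ncard = Δ) ∧
      G.Connected ∧ (∀ u v : V, G.dist u v ≤ 2) ∧
      (Δ + 2) ^ 2 ≤ 4 * Fintype.card V :=
  arcTransitive_diameter_two_lower_bound_even_degree_general Δ hEven
end

section
/- Let d ≥ 3 be an integer and q a prime power (the finite field F_q having q elements). The projective flag graph Γ(d,q) is arc-transitive: for any two arcs (ordered pairs of adjacent vertices) of Γ(d,q) there is a graph automorphism of Γ(d,q) mapping the first arc to the second. -/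
open Module

/-- The (point, line)-flags of the projective space `PG(d-1,q)`: pairs `(σ, L)` where
`σ` is a 1-dimensional linear subspace of `F^d`, `L` is a 2-dimensional linear subspace,
and `σ ⊆ L`. -/
abbrev ProjFlag (F : Type*) [Field F] (d : ℕ) : Type _ :=
  {p : Submodule F (Fin d → F) × Submodule F (Fin d → F) //
    finrank F p.1 = 1 ∧ finrank F p.2 = 2 ∧ p.1 ≤ p.2}

/-- The projective flag graph `Γ(d,q)`: vertices are (point, line)-flags of `PG(d-1,q)`,
two flags `(σ, L)` and `(τ, N)` being adjacent iff `L` and `N` are intersecting lines,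
i.e. `L ≠ N` and `L ∩ N` is a (projective) point. -/
def projFlagGraph (F : Type*) [Field F] (d : ℕ) : SimpleGraph (ProjFlag F d) where
  Adj x y := x.1.2 ≠ y.1.2 ∧ finrank F ↥(x.1.2 ⊓ y.1.2) = 1
  symm := by
    constructor
    rintro x y ⟨h1, h2⟩
    exact ⟨h1.symm, by rwa [inf_comm] at h2⟩
  loopless := by
    constructor
    rintro x ⟨h1, _⟩
    exact h1 rfl

/-! Adjacency of two flags depends only on their lines, so every permutation of the flags that
fixes each line is an automorphism; this moves the points freely within their lines. It remains
to send the two lines of one arc to those of the other, which a linear automorphism does: lines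
meeting in a point are `span {p, a}` and `span {p, b}` with `a, p, b` linearly independent, and
any two linearly independent triples are related by a linear automorphism. -/

open Submodule

section LinearAlgebra

variable {K V : Type*} [Field K] [AddCommGroup V] [Module K V]

theorem LinearIndependent.exists_linearEquiv_apply_eq {ι : Type*} [Finite ι] {v w : ι → V}
    (hv : LinearIndependent K v) (hw : LinearIndependent K w) :
    ∃ g : V ≃ₗ[K] V, ∀ i, g (v i) = w i := by
  have : FiniteDimensional K (span K (Set.range v)) :=
    FiniteDimensional.span_of_finite K (Set.finite_range v)
  obtain ⟨g, hg⟩ := exists_linearEquiv_restrict_eq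
    (hv.linearCombinationEquiv.symm ≪≫ₗ hw.linearCombinationEquiv)
  refine ⟨g, fun i => ?_⟩
  simpa using (hg (hv.linearCombinationEquiv (Finsupp.single i 1))).symm

theorem Submodule.eq_span_pair_of_finrank_eq_two {L : Submodule K V} (hL : finrank K L = 2)
    {x y : V} (hx : x ∈ L) (hy : y ∈ L) (hxy : LinearIndependent K ![x, y]) :
    L = span K {x, y} := by
  have : FiniteDimensional K L := Module.finite_of_finrank_eq_succ hL
  refine (eq_of_le_of_finrank_eq (span_le.mpr (Set.pair_subset hx hy)) ?_).symm
  rw [hL, ← Matrix.range_cons_cons_empty, finrank_span_eq_card hxy, Fintype.card_fin]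

theorem exists_linearIndependent_span_eq_of_finrank_inf_eq_one {L N : Submodule K V}
    (hL : finrank K L = 2) (hN : finrank K N = 2) (hLN : finrank K ↥(L ⊓ N) = 1) :
    ∃ a p b : V, LinearIndependent K ![a, p, b] ∧ L = span K {p, a} ∧ N = span K {p, b} := by
  obtain ⟨p, hp0, hp⟩ := (atom_iff_nonzero_span _).mp (isAtom_iff_finrank_eq_one.mpr hLN)
  obtain ⟨a, haL, haN⟩ := SetLike.not_le_iff_exists.mp fun hLN' : L ≤ N => by
    rw [inf_eq_left.mpr hLN', hL] at hLN; omega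
  obtain ⟨b, hbN, hbL⟩ := SetLike.not_le_iff_exists.mp fun hNL : N ≤ L => by
    rw [inf_eq_right.mpr hNL, hN] at hLN; omega
  have hpL : p ∈ L := (hp ▸ mem_span_singleton_self p : p ∈ L ⊓ N).1
  have hpN : p ∈ N := (hp ▸ mem_span_singleton_self p : p ∈ L ⊓ N).2
  have hpa : LinearIndependent K ![p, a] := (LinearIndependent.pair_iff' hp0).mpr
    fun c hc => haN (hc ▸ N.smul_mem c hpN)
  have hpb : LinearIndependent K ![p, b] := (LinearIndependent.pair_iff' hp0).mpr
    fun c hc => hbL (hc ▸ L.smul_mem c hpL)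
  refine ⟨a, p, b, linearIndependent_finCons.mpr ⟨hpb, fun ha => haN ?_⟩,
    eq_span_pair_of_finrank_eq_two hL hpL haL hpa, eq_span_pair_of_finrank_eq_two hN hpN hbN hpb⟩
  rw [Matrix.range_cons_cons_empty] at ha
  exact span_le.mpr (Set.pair_subset hpN hbN) ha

theorem exists_linearEquiv_map_eq_of_finrank_inf_eq_one {L N L' N' : Submodule K V}
    (hL : finrank K L = 2) (hN : finrank K N = 2) (hLN : finrank K ↥(L ⊓ N) = 1)
    (hL' : finrank K L' = 2) (hN' : finrank K N' = 2) (hLN' : finrank K ↥(L' ⊓ N') = 1) :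
    ∃ g : V ≃ₗ[K] V, L.map (g : V →ₗ[K] V) = L' ∧ N.map (g : V →ₗ[K] V) = N' := by
  obtain ⟨a, p, b, hapb, rfl, rfl⟩ :=
    exists_linearIndependent_span_eq_of_finrank_inf_eq_one hL hN hLN
  obtain ⟨a', p', b', hapb', rfl, rfl⟩ :=
    exists_linearIndependent_span_eq_of_finrank_inf_eq_one hL' hN' hLN'
  obtain ⟨g, hg⟩ := hapb.exists_linearEquiv_apply_eq hapb'
  have ha : g a = a' := hg 0
  have hp : g p = p' := hg 1
  have hb : g b = b' := hg 2
  refine ⟨g, ?_, ?_⟩ <;> simp only [map_span, Set.image_pair, LinearEquiv.coe_coe, ha, hp, hb]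

end LinearAlgebra

theorem Equiv.Perm.exists_fiberwise_apply_eq_of_ne {α β : Type*} (f : α → β) {a b c e : α}
    (hac : f a = f c) (hbe : f b = f e) (hab : f a ≠ f b) :
    ∃ σ : Equiv.Perm α, (∀ z, f (σ z) = f z) ∧ σ a = c ∧ σ b = e := by
  classical
  have swap_fiberwise {x y : α} (hxy : f x = f y) (z : α) : f (swap x y z) = f z := by
    rw [swap_apply_def]; split_ifs <;> simp_all
  have hab' : a ≠ b := fun h => hab (congrArg f h)
  have hae : a ≠ e := fun h => hab (by rw [h, hbe])
  have hec : e ≠ c := fun h => hab (by rw [hac, ← h, hbe])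
  refine ⟨swap a c * swap b e, fun z => ?_, ?_, ?_⟩
  · rw [Perm.mul_apply, swap_fiberwise hac, swap_fiberwise hbe]
  · rw [Perm.mul_apply, swap_apply_of_ne_of_ne hab' hae, swap_apply_left]
  · rw [Perm.mul_apply, swap_apply_left, swap_apply_of_ne_of_ne hae.symm hec]

namespace ProjFlag

variable {F : Type*} [Field F] {d : ℕ}

def map (g : (Fin d → F) ≃ₗ[F] (Fin d → F)) (x : ProjFlag F d) : ProjFlag F d :=
  ⟨(x.1.1.map (g : (Fin d → F) →ₗ[F] _), x.1.2.map (g : (Fin d → F) →ₗ[F] _)), by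
    rw [LinearEquiv.finrank_map_eq, LinearEquiv.finrank_map_eq]
    exact ⟨x.2.1, x.2.2.1, map_mono x.2.2.2⟩⟩

theorem map_symm_map (g : (Fin d → F) ≃ₗ[F] (Fin d → F)) (x : ProjFlag F d) :
    map g.symm (map g x) = x :=
  Subtype.ext (Prod.ext ((map_symm_eq_iff g).mpr rfl) ((map_symm_eq_iff g).mpr rfl))

theorem map_line (g : (Fin d → F) ≃ₗ[F] (Fin d → F)) (x : ProjFlag F d) :
    (map g x).1.2 = x.1.2.map (g : (Fin d → F) →ₗ[F] _) :=
  rfl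

end ProjFlag

namespace projFlagGraph

variable {F : Type*} [Field F] {d : ℕ}

theorem adj_iff {x y : ProjFlag F d} :
    (projFlagGraph F d).Adj x y ↔ x.1.2 ≠ y.1.2 ∧ finrank F ↥(x.1.2 ⊓ y.1.2) = 1 :=
  Iff.rfl

def isoOfLinearEquiv (g : (Fin d → F) ≃ₗ[F] (Fin d → F)) :
    projFlagGraph F d ≃g projFlagGraph F d where
  toFun := ProjFlag.map g
  invFun := ProjFlag.map g.symm
  left_inv := ProjFlag.map_symm_map g
  right_inv := ProjFlag.map_symm_map g.symm
  map_rel_iff' {x y} := by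
    rw [adj_iff, adj_iff, Equiv.coe_fn_mk, ProjFlag.map_line, ProjFlag.map_line,
      ← map_inf _ g.injective, LinearEquiv.finrank_map_eq,
      (map_injective_of_injective g.injective).ne_iff]

def isoOfLinePreserving (σ : Equiv.Perm (ProjFlag F d)) (hσ : ∀ z, (σ z).1.2 = z.1.2) :
    projFlagGraph F d ≃g projFlagGraph F d where
  toEquiv := σ
  map_rel_iff' {x y} := by
    rw [adj_iff, adj_iff, hσ, hσ]

end projFlagGraph

theorem projFlagGraph_arcTransitive_general (d : ℕ) (F : Type*) [Field F] :
    ∀ u v x y : ProjFlag F d,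
      (projFlagGraph F d).Adj u v → (projFlagGraph F d).Adj x y →
        ∃ φ : projFlagGraph F d ≃g projFlagGraph F d, φ u = x ∧ φ v = y := by
  intro u v x y huv hxy
  obtain ⟨g, hgu, hgv⟩ := exists_linearEquiv_map_eq_of_finrank_inf_eq_one
    u.2.2.1 v.2.2.1 huv.2 x.2.2.1 y.2.2.1 hxy.2
  set Φ := projFlagGraph.isoOfLinearEquiv g
  have hu : (Φ u).1.2 = x.1.2 := hgu
  have hv : (Φ v).1.2 = y.1.2 := hgv
  obtain ⟨σ, hσ, hσu, hσv⟩ := Equiv.Perm.exists_fiberwise_apply_eq_of_ne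
    (fun z : ProjFlag F d => z.1.2) hu hv (by rw [hu, hv]; exact hxy.1)
  exact ⟨Φ.trans (projFlagGraph.isoOfLinePreserving σ hσ), hσu, hσv⟩

theorem projFlagGraph_arcTransitive (d : ℕ) (hd : 3 ≤ d)
    (q : ℕ) (F : Type*) [Field F] [Fintype F] (hq : Fintype.card F = q) :
    ∀ u v x y : ProjFlag F d,
      (projFlagGraph F d).Adj u v → (projFlagGraph F d).Adj x y →
        ∃ φ : projFlagGraph F d ≃g projFlagGraph F d, φ u = x ∧ φ v = y :=
  projFlagGraph_arcTransitive_general d F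
end
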